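/- Zig-zag homotopy equivalence: given a short exact sequence of complexes 0 → C'' →^{r'} C' →^{r} C → 0 with exact middle term, a homotopy h' on C' with (h')² = 0 and h'd' + d'h' = 1, and splittings ℓ' : C' → C'', ℓ : C → C' satisfying r'ℓ' + ℓr = 1, rℓ = 1, ℓ'r' = 1, the maps R = r h' r' and L = ℓ' d' ℓ are chain maps (up to a sign/degree shift by one: L d = -d'' L and R d'' = -d R) and form a homotopy equivalence between C'' and C with homotopies r h' ℓ on C and ℓ' h' r' on C''. -/

import Mathlib

/-!
Every identity follows by inserting `h' d' + d' h' = 1` or `r' ℓ' + ℓ r = 1` into a composite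
and moving differentials across the chain maps `r`, `r'`. The key relation is
`d' ℓ = r' L + ℓ d`: the failure of `ℓ` to be a chain map is measured by `L = ℓ' d' ℓ`.
-/

open LinearMap

namespace LinearMap

variable {R A B C : Type*} [Ring R] [AddCommGroup A] [Module R A] [AddCommGroup B] [Module R B]
  [AddCommGroup C] [Module R C]

theorem comp_eq_zero_of_split (i : A →ₗ[R] B) (p : B →ₗ[R] C) (s : C →ₗ[R] B) (q : B →ₗ[R] A)
    (hsplit : i ∘ₗ q + s ∘ₗ p = LinearMap.id) (hps : p ∘ₗ s = LinearMap.id)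
    (hqi : q ∘ₗ i = LinearMap.id) :
    p ∘ₗ i = 0 := by
  have hdouble : p ∘ₗ i = p ∘ₗ i + p ∘ₗ i :=
    calc p ∘ₗ i = p ∘ₗ (i ∘ₗ q + s ∘ₗ p) ∘ₗ i := by rw [hsplit, id_comp]
      _ = (p ∘ₗ i) ∘ₗ (q ∘ₗ i) + (p ∘ₗ s) ∘ₗ (p ∘ₗ i) := by
        simp only [comp_add, add_comp, comp_assoc]
      _ = p ∘ₗ i + p ∘ₗ i := by rw [hps, hqi, comp_id, id_comp]
  exact left_eq_add.mp hdouble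

end LinearMap

section ZigZag

variable {R C C' C'' : Type*} [Ring R] [AddCommGroup C] [Module R C] [AddCommGroup C']
  [Module R C'] [AddCommGroup C''] [Module R C'']
  {d : C →ₗ[R] C} {d' : C' →ₗ[R] C'} {d'' : C'' →ₗ[R] C''}
  {r' : C'' →ₗ[R] C'} {r : C' →ₗ[R] C} {h' : C' →ₗ[R] C'} {l' : C' →ₗ[R] C''} {l : C →ₗ[R] C'}

theorem zigzag_d'_comp_l (hrchain : d ∘ₗ r = r ∘ₗ d')
    (hsplit : r' ∘ₗ l' + l ∘ₗ r = LinearMap.id) (hrl : r ∘ₗ l = LinearMap.id) :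
    d' ∘ₗ l = r' ∘ₗ (l' ∘ₗ d' ∘ₗ l) + l ∘ₗ d :=
  calc d' ∘ₗ l = (r' ∘ₗ l' + l ∘ₗ r) ∘ₗ d' ∘ₗ l := by rw [hsplit, id_comp]
    _ = r' ∘ₗ (l' ∘ₗ d' ∘ₗ l) + l ∘ₗ (r ∘ₗ d') ∘ₗ l := by simp only [add_comp, comp_assoc]
    _ = r' ∘ₗ (l' ∘ₗ d' ∘ₗ l) + l ∘ₗ d := by rw [← hrchain, comp_assoc, hrl, comp_id]

theorem zigzagL_comp_d (hd'2 : d' ∘ₗ d' = 0) (hr'chain : d' ∘ₗ r' = r' ∘ₗ d'')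
    (hrchain : d ∘ₗ r = r ∘ₗ d') (hsplit : r' ∘ₗ l' + l ∘ₗ r = LinearMap.id)
    (hrl : r ∘ₗ l = LinearMap.id) (hl'r' : l' ∘ₗ r' = LinearMap.id) :
    (l' ∘ₗ d' ∘ₗ l) ∘ₗ d = -(d'' ∘ₗ (l' ∘ₗ d' ∘ₗ l)) :=
  calc (l' ∘ₗ d' ∘ₗ l) ∘ₗ d = l' ∘ₗ d' ∘ₗ (d' ∘ₗ l - r' ∘ₗ (l' ∘ₗ d' ∘ₗ l)) := by
        simp only [comp_assoc]
        rw [eq_sub_of_add_eq' (zigzag_d'_comp_l hrchain hsplit hrl).symm]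
    _ = l' ∘ₗ (d' ∘ₗ d') ∘ₗ l - (l' ∘ₗ r') ∘ₗ d'' ∘ₗ (l' ∘ₗ d' ∘ₗ l) := by
        simp only [comp_sub, comp_assoc]; rw [← comp_assoc _ r' d', hr'chain, comp_assoc]
    _ = -(d'' ∘ₗ (l' ∘ₗ d' ∘ₗ l)) := by rw [hd'2, hl'r']; simp

theorem zigzagR_comp_d'' (hcontract : h' ∘ₗ d' + d' ∘ₗ h' = LinearMap.id)
    (hr'chain : d' ∘ₗ r' = r' ∘ₗ d'') (hrchain : d ∘ₗ r = r ∘ₗ d') (hrr' : r ∘ₗ r' = 0) :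
    (r ∘ₗ h' ∘ₗ r') ∘ₗ d'' = -(d ∘ₗ (r ∘ₗ h' ∘ₗ r')) :=
  calc (r ∘ₗ h' ∘ₗ r') ∘ₗ d'' = r ∘ₗ (h' ∘ₗ d') ∘ₗ r' := by simp only [comp_assoc, hr'chain]
    _ = r ∘ₗ (LinearMap.id - d' ∘ₗ h') ∘ₗ r' := by rw [eq_sub_of_add_eq hcontract]
    _ = r ∘ₗ r' - (r ∘ₗ d') ∘ₗ h' ∘ₗ r' := by simp only [sub_comp, comp_sub, id_comp, comp_assoc]
    _ = -(d ∘ₗ (r ∘ₗ h' ∘ₗ r')) := by rw [hrr', ← hrchain, zero_sub, comp_assoc]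

theorem zigzagR_comp_zigzagL (hcontract : h' ∘ₗ d' + d' ∘ₗ h' = LinearMap.id)
    (hrchain : d ∘ₗ r = r ∘ₗ d') (hsplit : r' ∘ₗ l' + l ∘ₗ r = LinearMap.id)
    (hrl : r ∘ₗ l = LinearMap.id) :
    (r ∘ₗ h' ∘ₗ r') ∘ₗ (l' ∘ₗ d' ∘ₗ l)
      = LinearMap.id - d ∘ₗ (r ∘ₗ h' ∘ₗ l) - (r ∘ₗ h' ∘ₗ l) ∘ₗ d :=
  calc (r ∘ₗ h' ∘ₗ r') ∘ₗ (l' ∘ₗ d' ∘ₗ l) = r ∘ₗ h' ∘ₗ (d' ∘ₗ l - l ∘ₗ d) := by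
        simp only [comp_assoc]
        rw [eq_sub_of_add_eq (zigzag_d'_comp_l hrchain hsplit hrl).symm]
    _ = r ∘ₗ (h' ∘ₗ d') ∘ₗ l - (r ∘ₗ h' ∘ₗ l) ∘ₗ d := by simp only [comp_sub, comp_assoc]
    _ = r ∘ₗ (LinearMap.id - d' ∘ₗ h') ∘ₗ l - (r ∘ₗ h' ∘ₗ l) ∘ₗ d := by
        rw [eq_sub_of_add_eq hcontract]
    _ = r ∘ₗ l - (r ∘ₗ d') ∘ₗ h' ∘ₗ l - (r ∘ₗ h' ∘ₗ l) ∘ₗ d := by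
        simp only [sub_comp, comp_sub, id_comp, comp_assoc]
    _ = LinearMap.id - d ∘ₗ (r ∘ₗ h' ∘ₗ l) - (r ∘ₗ h' ∘ₗ l) ∘ₗ d := by
        rw [hrl, ← hrchain, comp_assoc]

theorem zigzagL_comp_zigzagR (hcontract : h' ∘ₗ d' + d' ∘ₗ h' = LinearMap.id)
    (hr'chain : d' ∘ₗ r' = r' ∘ₗ d'') (hsplit : r' ∘ₗ l' + l ∘ₗ r = LinearMap.id)
    (hl'r' : l' ∘ₗ r' = LinearMap.id) :
    (l' ∘ₗ d' ∘ₗ l) ∘ₗ (r ∘ₗ h' ∘ₗ r')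
      = LinearMap.id - d'' ∘ₗ (l' ∘ₗ h' ∘ₗ r') - (l' ∘ₗ h' ∘ₗ r') ∘ₗ d'' :=
  calc (l' ∘ₗ d' ∘ₗ l) ∘ₗ (r ∘ₗ h' ∘ₗ r')
        = l' ∘ₗ d' ∘ₗ (LinearMap.id - r' ∘ₗ l') ∘ₗ h' ∘ₗ r' := by
        rw [← eq_sub_of_add_eq' hsplit]; simp only [comp_assoc]
    _ = l' ∘ₗ (d' ∘ₗ h') ∘ₗ r' - (l' ∘ₗ d' ∘ₗ r') ∘ₗ l' ∘ₗ h' ∘ₗ r' := by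
        simp only [sub_comp, comp_sub, id_comp, comp_assoc]
    _ = l' ∘ₗ (LinearMap.id - h' ∘ₗ d') ∘ₗ r' - (l' ∘ₗ r') ∘ₗ d'' ∘ₗ l' ∘ₗ h' ∘ₗ r' := by
        rw [eq_sub_of_add_eq' hcontract, hr'chain]; simp only [comp_assoc]
    _ = l' ∘ₗ r' - (l' ∘ₗ h' ∘ₗ r') ∘ₗ d'' - (l' ∘ₗ r') ∘ₗ d'' ∘ₗ l' ∘ₗ h' ∘ₗ r' := by
        simp only [sub_comp, comp_sub, id_comp, comp_assoc, hr'chain]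
    _ = LinearMap.id - d'' ∘ₗ (l' ∘ₗ h' ∘ₗ r') - (l' ∘ₗ h' ∘ₗ r') ∘ₗ d'' := by
        rw [hl'r', id_comp, sub_right_comm]

end ZigZag

theorem stmt_19 {Rng : Type*} [CommRing Rng] {C C' C'' : Type*}
    [AddCommGroup C] [Module Rng C] [AddCommGroup C'] [Module Rng C']
    [AddCommGroup C''] [Module Rng C'']
    (d : Module.End Rng C) (d' : Module.End Rng C') (d'' : Module.End Rng C'')
    (hd'2 : d' * d' = 0)
    (r' : C'' →ₗ[Rng] C') (r : C' →ₗ[Rng] C)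
    (hr'chain : d' ∘ₗ r' = r' ∘ₗ d'') (hrchain : d ∘ₗ r = r ∘ₗ d')
    (h' : Module.End Rng C')
    (hcontract : h' * d' + d' * h' = 1)
    (l' : C' →ₗ[Rng] C'') (l : C →ₗ[Rng] C')
    (hsplit : r' ∘ₗ l' + l ∘ₗ r = LinearMap.id)
    (hrl : r ∘ₗ l = LinearMap.id) (hl'r' : l' ∘ₗ r' = LinearMap.id) :
    ((l' ∘ₗ d' ∘ₗ l) ∘ₗ d = -(d'' ∘ₗ (l' ∘ₗ d' ∘ₗ l))) ∧
    ((r ∘ₗ h' ∘ₗ r') ∘ₗ d'' = -(d ∘ₗ (r ∘ₗ h' ∘ₗ r'))) ∧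
    ((r ∘ₗ h' ∘ₗ r') ∘ₗ (l' ∘ₗ d' ∘ₗ l)
        = LinearMap.id - d ∘ₗ (r ∘ₗ h' ∘ₗ l) - (r ∘ₗ h' ∘ₗ l) ∘ₗ d) ∧
    ((l' ∘ₗ d' ∘ₗ l) ∘ₗ (r ∘ₗ h' ∘ₗ r')
        = LinearMap.id - d'' ∘ₗ (l' ∘ₗ h' ∘ₗ r') - (l' ∘ₗ h' ∘ₗ r') ∘ₗ d'') := by
  have hrr' : r ∘ₗ r' = 0 := comp_eq_zero_of_split r' r l l' hsplit hrl hl'r'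
  exact ⟨zigzagL_comp_d hd'2 hr'chain hrchain hsplit hrl hl'r',
    zigzagR_comp_d'' hcontract hr'chain hrchain hrr',
    zigzagR_comp_zigzagL hcontract hrchain hsplit hrl,
    zigzagL_comp_zigzagR hcontract hr'chain hsplit hl'r'⟩
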